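/- Assume 0 ≤ g(T) ≤ M for all T ⊆ B. Let X, Y ⊆ V be such that X_A ⊊ R and Y_A ⊊ R. Then F(X) + F(Y) ≥ F(X ∪ Y) + F(X ∩ Y). -/

import Mathlib

/-! On sets `S` with `S_A ⊊ R`, `F(S) = 1 + |S_B| / (2n)` is modular, so the inequality is an
equality as long as `(X ∪ Y)_A ⊊ R`. The only other case is `(X ∪ Y)_A = R`: then `f` drops from
`1` to `0` at `X ∪ Y`, which outweighs the `g`-term `g / (4Mn) ≤ 1/4` it gains there, while
`φ(X ∪ Y) + φ(X ∩ Y) = |(X ∩ Y)_B| ≤ φ(X) + φ(Y)`. -/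

open Finset

variable {α : Type*}

/-- The function `f_{A,R}`: 0 on `R`, 1 on strict subsets/supersets of `R`, 2 otherwise. -/
noncomputable def fAR [DecidableEq α] (R T : Finset α) : ℝ :=
  if T = R then 0 else if T ⊂ R ∨ R ⊂ T then 1 else 2

/-- The submodularizer `φ` on subsets of `V`, where `B = V \ A`:
`φ(S) = |S ∩ B|` if `S ∩ A ⊊ R`, `-|S ∩ B|` if `S ∩ A ⊋ R`, and `0` otherwise. -/
noncomputable def phi [DecidableEq α] (A R B S : Finset α) : ℝ :=
  if S ∩ A ⊂ R then ((S ∩ B).card : ℝ)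
  else if R ⊂ S ∩ A then -((S ∩ B).card : ℝ)
  else 0

/-- The main building block
`F(S) = f_{A,R}(S ∩ A) + (1/(2n)) φ(S) + (1/(4Mn)) ⋅ 1[S ∩ A = R] ⋅ g(S ∩ B)`. -/
noncomputable def Fbb [DecidableEq α] (n : ℕ) (A R B : Finset α) (M : ℝ)
    (g : Finset α → ℝ) (S : Finset α) : ℝ :=
  fAR R (S ∩ A) + (1 / (2 * (n : ℝ))) * phi A R B S
    + (1 / (4 * M * (n : ℝ))) * (if S ∩ A = R then (1 : ℝ) else 0) * g (S ∩ B)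

section

variable [DecidableEq α] {n : ℕ} {A R B : Finset α} {M : ℝ} {g : Finset α → ℝ}
  {S X Y : Finset α}

theorem fAR_of_ssubset {T : Finset α} (hT : T ⊂ R) : fAR R T = 1 := by
  simp [fAR, hT, hT.ne]

theorem phi_of_ssubset (hS : S ∩ A ⊂ R) : phi A R B S = (S ∩ B).card := by
  simp [phi, hS]

theorem phi_of_inter_eq (hS : S ∩ A = R) : phi A R B S = 0 := by
  simp [phi, hS]

theorem Fbb_of_ssubset (hS : S ∩ A ⊂ R) :
    Fbb n A R B M g S = 1 + 1 / (2 * n) * (S ∩ B).card := by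
  simp [Fbb, fAR_of_ssubset hS, phi_of_ssubset hS, hS.ne]

theorem Fbb_of_inter_eq (hS : S ∩ A = R) :
    Fbb n A R B M g S = 1 / (4 * M * n) * g (S ∩ B) := by
  simp [Fbb, fAR, phi_of_inter_eq hS, hS]

theorem card_union_inter_add_card_inter_inter (B : Finset α) :
    ((X ∪ Y) ∩ B).card + (X ∩ Y ∩ B).card = (X ∩ B).card + (Y ∩ B).card := by
  rw [union_inter_distrib_right, inter_inter_distrib_right]
  exact card_union_add_card_inter _ _

theorem Fbb_union_add_inter_of_ssubset (hX : X ∩ A ⊂ R) (hY : Y ∩ A ⊂ R)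
    (hXY : (X ∪ Y) ∩ A ⊂ R) :
    Fbb n A R B M g (X ∪ Y) + Fbb n A R B M g (X ∩ Y)
      = Fbb n A R B M g X + Fbb n A R B M g Y := by
  have hinter : X ∩ Y ∩ A ⊂ R :=
    (inter_subset_inter_right inter_subset_left).trans_ssubset hX
  have hcard : (((X ∪ Y) ∩ B).card : ℝ) + (X ∩ Y ∩ B).card
      = (X ∩ B).card + (Y ∩ B).card := by
    exact_mod_cast card_union_inter_add_card_inter_inter B
  rw [Fbb_of_ssubset hX, Fbb_of_ssubset hY, Fbb_of_ssubset hXY, Fbb_of_ssubset hinter]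
  linear_combination 1 / (2 * (n : ℝ)) * hcard

theorem Fbb_union_add_inter_le_of_union_eq (hn : 1 ≤ n) (hM : 0 < M)
    (hg : g ((X ∪ Y) ∩ B) ≤ M) (hX : X ∩ A ⊂ R) (hY : Y ∩ A ⊂ R)
    (hXY : (X ∪ Y) ∩ A = R) :
    Fbb n A R B M g (X ∪ Y) + Fbb n A R B M g (X ∩ Y)
      ≤ Fbb n A R B M g X + Fbb n A R B M g Y := by
  have hinter : X ∩ Y ∩ A ⊂ R :=
    (inter_subset_inter_right inter_subset_left).trans_ssubset hX
  have hn' : (1 : ℝ) ≤ n := by exact_mod_cast hn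
  have hgterm : 1 / (4 * M * n) * g ((X ∪ Y) ∩ B) ≤ 1 := by
    rw [one_div_mul_eq_div, div_le_one (by positivity)]
    nlinarith
  have hcard : ((X ∩ Y ∩ B).card : ℝ) ≤ (X ∩ B).card + (Y ∩ B).card := by
    exact_mod_cast (card_le_card (inter_subset_inter_right inter_subset_left)).trans
      (Nat.le_add_right _ _)
  rw [Fbb_of_inter_eq hXY, Fbb_of_ssubset hX, Fbb_of_ssubset hY, Fbb_of_ssubset hinter]
  have hphi := mul_le_mul_of_nonneg_left hcard (by positivity : (0 : ℝ) ≤ 1 / (2 * n))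
  linarith

end

theorem Fbb_case23_general [DecidableEq α] (V A R : Finset α) (hV : 1 ≤ V.card)
    (M : ℝ) (hM : 0 < M) (g : Finset α → ℝ)
    (hg : ∀ T ⊆ V \ A, 0 ≤ g T ∧ g T ≤ M)
    (X Y : Finset α)
    (hXA : X ∩ A ⊂ R) (hYA : Y ∩ A ⊂ R) :
    Fbb V.card A R (V \ A) M g (X ∪ Y) + Fbb V.card A R (V \ A) M g (X ∩ Y)
      ≤ Fbb V.card A R (V \ A) M g X + Fbb V.card A R (V \ A) M g Y := by
  have hXY : (X ∪ Y) ∩ A ⊆ R :=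
    (union_inter_distrib_right X Y A).trans_subset (union_subset hXA.subset hYA.subset)
  rcases hXY.ssubset_or_eq with hXY | hXY
  · exact (Fbb_union_add_inter_of_ssubset hXA hYA hXY).le
  · exact Fbb_union_add_inter_le_of_union_eq hV hM (hg _ inter_subset_right).2 hXA hYA hXY

/-- if 0 ≤ g ≤ M on subsets of B and X ∩ A ⊊ R, Y ∩ A ⊊ R, then F(X) + F(Y) ≥ F(X ∪ Y) + F(X ∩ Y). -/
theorem Fbb_case23 [DecidableEq α] (V A R : Finset α) (hV : 1 ≤ V.card)
    (hA : A.Nonempty) (hR : R.Nonempty) (hRA : R ⊆ A) (hAV : A ⊆ V)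
    (M : ℝ) (hM : 0 < M) (g : Finset α → ℝ)
    (hg : ∀ T ⊆ V \ A, 0 ≤ g T ∧ g T ≤ M)
    (X Y : Finset α) (hX : X ⊆ V) (hY : Y ⊆ V)
    (hXA : X ∩ A ⊂ R) (hYA : Y ∩ A ⊂ R) :
    Fbb V.card A R (V \ A) M g (X ∪ Y) + Fbb V.card A R (V \ A) M g (X ∩ Y)
      ≤ Fbb V.card A R (V \ A) M g X + Fbb V.card A R (V \ A) M g Y :=
  Fbb_case23_general V A R hV M hM g hg X Y hXA hYA
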